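/- Let X, Y be complexes in an additive category 𝔞 with Y bounded-above. Then there is an isomorphism of cochain complexes \widehat{Hom}_𝔞(X, Y) ≅ colim_{n→∞} Hom_𝔞(X, σ_{≤ −n}(Y)), where the structure maps of the colimit are induced by the projections σ_{≤ −n}(Y) → σ_{≤ −(n+1)}(Y). -/

import Mathlib

open CategoryTheory Limits ZeroObject

section Brutal

variable {C : Type*} [Category C] [Preadditive C] [HasZeroObject C]

/-- The brutal truncation `σ_{≥ n} X` of a cochain complex. -/
noncomputable def truncGE (X : CochainComplex C ℤ) (n : ℤ) : CochainComplex C ℤ :=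
  CochainComplex.of (fun i => if n ≤ i then X.X i else 0)
    (fun i =>
      if hi : n ≤ i then
        eqToHom (if_pos hi) ≫ X.d i (i + 1) ≫ eqToHom (if_pos (by omega : n ≤ i + 1)).symm
      else 0)
    (fun i => by
      try dsimp only
      by_cases hi : n ≤ i
      · rw [dif_pos hi, dif_pos (show n ≤ i + 1 by omega)]; simp
      · rw [dif_neg hi]; simp)

lemma truncGE_X (X : CochainComplex C ℤ) (n i : ℤ) :
    (truncGE X n).X i = if n ≤ i then X.X i else 0 := rfl

lemma truncGE_d (X : CochainComplex C ℤ) (n i : ℤ) :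
    (truncGE X n).d i (i + 1) =
      if hi : n ≤ i then
        eqToHom (if_pos hi) ≫ X.d i (i + 1) ≫ eqToHom (if_pos (by omega : n ≤ i + 1)).symm
      else 0 :=
  CochainComplex.of_d (fun i => if n ≤ i then X.X i else 0)
    (fun i =>
      if hi : n ≤ i then
        eqToHom (if_pos hi) ≫ X.d i (i + 1) ≫ eqToHom (if_pos (by omega : n ≤ i + 1)).symm
      else 0) i

/-- The brutal truncation `σ_{≤ n} X` of a cochain complex. -/
noncomputable def truncLE (X : CochainComplex C ℤ) (n : ℤ) : CochainComplex C ℤ :=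
  CochainComplex.of (fun i => if i ≤ n then X.X i else 0)
    (fun i =>
      if hj : i + 1 ≤ n then
        eqToHom (if_pos (by omega : i ≤ n)) ≫ X.d i (i + 1) ≫ eqToHom (if_pos hj).symm
      else 0)
    (fun i => by
      try dsimp only
      by_cases hj : i + 1 + 1 ≤ n
      · rw [dif_pos (show i + 1 ≤ n by omega), dif_pos hj]; simp
      · rw [dif_neg hj]; simp)

lemma truncLE_X (X : CochainComplex C ℤ) (n i : ℤ) :
    (truncLE X n).X i = if i ≤ n then X.X i else 0 := rfl

lemma truncLE_d (X : CochainComplex C ℤ) (n i : ℤ) :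
    (truncLE X n).d i (i + 1) =
      if hj : i + 1 ≤ n then
        eqToHom (if_pos (by omega : i ≤ n)) ≫ X.d i (i + 1) ≫ eqToHom (if_pos hj).symm
      else 0 :=
  CochainComplex.of_d (fun i => if i ≤ n then X.X i else 0)
    (fun i =>
      if hj : i + 1 ≤ n then
        eqToHom (if_pos (by omega : i ≤ n)) ≫ X.d i (i + 1) ≫ eqToHom (if_pos hj).symm
      else 0) i

/-- The canonical inclusion `σ_{≥ n} X ⟶ X`. -/
noncomputable def truncGEι (X : CochainComplex C ℤ) (n : ℤ) : truncGE X n ⟶ X where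
  f i := if hi : n ≤ i then eqToHom ((truncGE_X X n i).trans (if_pos hi)) else 0
  comm' := by
    rintro i j (rfl : i + 1 = j)
    try rw [truncGE_d]
    by_cases hi : n ≤ i
    · rw [dif_pos hi, dif_pos hi, dif_pos (show n ≤ i + 1 by omega)]
      erw [Category.assoc, Category.assoc, eqToHom_trans, eqToHom_refl, Category.comp_id]
      rfl
    · rw [dif_neg hi, dif_neg hi]; exact zero_comp.trans zero_comp.symm

/-- The canonical projection `X ⟶ σ_{≤ n} X`. -/
noncomputable def truncLEπ (X : CochainComplex C ℤ) (n : ℤ) : X ⟶ truncLE X n where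
  f i := if hi : i ≤ n then eqToHom ((if_pos hi).symm.trans (truncLE_X X n i).symm) else 0
  comm' := by
    rintro i j (rfl : i + 1 = j)
    try rw [truncLE_d]
    by_cases hj : i + 1 ≤ n
    · rw [dif_pos hj, dif_pos (show i ≤ n by omega), dif_pos hj]
      erw [eqToHom_trans_assoc, eqToHom_refl, Category.id_comp]
      rfl
    · rw [dif_neg hj, dif_neg hj]; exact comp_zero.trans comp_zero.symm

/-- The canonical projection `σ_{≤ a} X ⟶ σ_{≤ b} X` for `b ≤ a`. -/
noncomputable def truncLEmap (X : CochainComplex C ℤ) (a b : ℤ) (hba : b ≤ a) :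
    truncLE X a ⟶ truncLE X b where
  f i := if hi : i ≤ b then
      eqToHom (((truncLE_X X a i).trans (if_pos (hi.trans hba))).trans
        (((truncLE_X X b i).trans (if_pos hi)).symm))
    else 0
  comm' := by
    rintro i j (rfl : i + 1 = j)
    try rw [truncLE_d, truncLE_d]
    by_cases hj : i + 1 ≤ b
    · rw [dif_pos hj, dif_pos (show i ≤ b by omega), dif_pos (show i + 1 ≤ a by omega),
        dif_pos hj]
      erw [eqToHom_trans_assoc, Category.assoc, Category.assoc, eqToHom_trans]
      rfl
    · rw [dif_neg hj, dif_neg hj]; exact comp_zero.trans comp_zero.symm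

/-- A complex is bounded above if its components vanish in all sufficiently
large degrees. -/
def BoundedAbove (X : CochainComplex C ℤ) : Prop :=
  ∃ b : ℤ, ∀ i : ℤ, b < i → IsZero (X.X i)

/-- A complex is bounded below if its components vanish in all sufficiently
small degrees. -/
def BoundedBelow (X : CochainComplex C ℤ) : Prop :=
  ∃ a : ℤ, ∀ i : ℤ, i < a → IsZero (X.X i)

/-- A complex is bounded if it is bounded above and bounded below. -/
def BoundedComplex (X : CochainComplex C ℤ) : Prop :=
  BoundedAbove X ∧ BoundedBelow X

variable (C) [HasBinaryBiproducts C]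

open Pretriangulated in
/-- The class of morphisms in the homotopy category `K(C)` whose cone is isomorphic
to a bounded complex; the Verdier quotient `K(C)/K^b(C)` is the localization of
`K(C)` at this class. -/
noncomputable def Wb : MorphismProperty (HomotopyCategory C (ComplexShape.up ℤ)) :=
  fun X Y f =>
    ∃ (Z : HomotopyCategory C (ComplexShape.up ℤ)) (g : Y ⟶ Z) (h : Z ⟶ X⟦(1 : ℤ)⟧),
      (Triangle.mk f g h ∈ distTriang (HomotopyCategory C (ComplexShape.up ℤ))) ∧
      ∃ Z₀ : CochainComplex C ℤ, BoundedComplex Z₀ ∧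
        Nonempty (Z ≅ (HomotopyCategory.quotient C (ComplexShape.up ℤ)).obj Z₀)

end Brutal

open CochainComplex.HomComplex

/-- A graded morphism (cochain) is bounded if only finitely many of its components
are nonzero; `\widehat{Hom}_𝔞(X,Y)` is the quotient of the Hom-complex by the
subcomplex of bounded graded morphisms. -/
def IsBoundedCochain {C : Type*} [Category C] [Preadditive C]
    {K L : CochainComplex C ℤ} {n : ℤ} (z : Cochain K L n) : Prop :=
  {p : ℤ | z.v p (p + n) rfl ≠ 0}.Finite

/-- **`\widehat{Hom}_𝔞(X, Y) ≅ colim_n Hom_𝔞(X, σ_{≤ -n} Y)` for `Y` bounded above.**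
The family of cochain maps `Hom_𝔞(X, Y) ⟶ Hom_𝔞(X, σ_{≤ -n} Y)` given by
postcomposition with the projections `π_n : Y ⟶ σ_{≤ -n} Y` is compatible with the
structure maps of the colimit and commutes with the differentials, it is jointly
surjective onto the colimit (every element of some `Hom_𝔞(X, σ_{≤ -n} Y)` agrees,
at some later stage, with one coming from `Hom_𝔞(X, Y)`), and its kernel in the
colimit is exactly the subcomplex of bounded graded morphisms.  In other words it
induces an isomorphism of cochain complexes
`\widehat{Hom}_𝔞(X, Y) ≅ colim_{n → ∞} Hom_𝔞(X, σ_{≤ -n} Y)`. -/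
theorem hatHom_iso_colim_hom_truncLE
    {C : Type*} [Category C] [Preadditive C] [HasZeroObject C]
    (X Y : CochainComplex C ℤ) (hY : BoundedAbove Y) :
    -- compatibility with the structure maps of the colimit
    (∀ (k : ℕ) (n : ℤ) (z : Cochain X Y n),
      (z.comp (Cochain.ofHom (truncLEπ Y (-(k : ℤ)))) (add_zero n)).comp
          (Cochain.ofHom (truncLEmap Y (-(k : ℤ)) (-((k + 1 : ℕ) : ℤ)) (by omega)))
          (add_zero n) =
        z.comp (Cochain.ofHom (truncLEπ Y (-((k + 1 : ℕ) : ℤ)))) (add_zero n)) ∧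
    -- the maps are cochain maps: they commute with the differentials
    (∀ (k : ℕ) (n : ℤ) (z : Cochain X Y n),
      (δ n (n + 1) z).comp (Cochain.ofHom (truncLEπ Y (-(k : ℤ)))) (add_zero (n + 1)) =
        δ n (n + 1) (z.comp (Cochain.ofHom (truncLEπ Y (-(k : ℤ)))) (add_zero n))) ∧
    -- joint surjectivity onto the colimit
    (∀ (k : ℕ) (n : ℤ) (w : Cochain X (truncLE Y (-(k : ℤ))) n),
      ∃ (m : ℕ) (hkm : k ≤ m) (z : Cochain X Y n),
        w.comp (Cochain.ofHom (truncLEmap Y (-(k : ℤ)) (-(m : ℤ)) (by omega)))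
            (add_zero n) =
          z.comp (Cochain.ofHom (truncLEπ Y (-(m : ℤ)))) (add_zero n)) ∧
    -- the kernel in the colimit is exactly the bounded graded morphisms
    (∀ (n : ℤ) (z : Cochain X Y n),
      IsBoundedCochain z ↔
        ∃ k : ℕ, z.comp (Cochain.ofHom (truncLEπ Y (-(k : ℤ)))) (add_zero n) = 0) := by
  obtain ⟨b, hb⟩ := hY
  refine ⟨?_, ?_, ?_, ?_⟩
  · -- compatibility with structure maps
    intro k n z
    ext p q hpq
    simp only [Cochain.comp_zero_cochain_v, Cochain.ofHom_v]
    dsimp [truncLEπ, truncLEmap]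
    by_cases hq1 : q + (k : ℤ) ≤ -1
    · simp [hq1, (show q ≤ -(k : ℤ) by omega)]
    · simp [hq1, (show ¬ q ≤ -(k : ℤ) - 1 by omega)]
  · -- commutes with differentials
    intro k n z
    exact (δ_comp_ofHom z _ _).symm
  · -- joint surjectivity
    intro k n w
    refine ⟨k, le_refl k, Cochain.mk (fun p q hpq =>
      if hq : q ≤ -(k : ℤ) then
        w.v p q hpq ≫ eqToHom ((truncLE_X Y (-(k : ℤ)) q).trans (if_pos hq))
      else 0), ?_⟩
    ext p q hpq
    simp only [Cochain.comp_zero_cochain_v, Cochain.ofHom_v, Cochain.mk_v]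
    dsimp [truncLEπ, truncLEmap]
    by_cases hq : q ≤ -(k : ℤ)
    · simp [hq]
    · simp [hq]
  · -- kernel = bounded cochains
    intro n z
    constructor
    · intro hz
      obtain ⟨lb, hlb⟩ := hz.bddBelow
      refine ⟨(-lb - n + 1).toNat, ?_⟩
      ext p q hpq
      obtain rfl := hpq
      simp only [Cochain.comp_zero_cochain_v, Cochain.ofHom_v, Cochain.zero_v]
      dsimp [truncLEπ]
      by_cases hq : p + n ≤ -(((-lb - n + 1).toNat : ℕ) : ℤ)
      · rw [dif_pos hq]
        have htn := Int.self_le_toNat (-lb - n + 1)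
        have hp : z.v p (p + n) rfl = 0 := by
          by_contra hne
          have := hlb (Set.mem_setOf_eq ▸ hne : p ∈ {p : ℤ | z.v p (p + n) rfl ≠ 0})
          omega
        rw [hp, zero_comp]
      · rw [dif_neg hq, comp_zero]
    · rintro ⟨k, hk⟩
      apply Set.Finite.subset (Set.finite_Ioc (-(k : ℤ) - n) (b - n))
      intro p hp
      simp only [Set.mem_setOf_eq] at hp
      simp only [Set.mem_Ioc]
      constructor
      · by_contra h
        push_neg at h
        apply hp
        have h0 := congr_arg (fun c => Cochain.v c p (p + n) rfl) hk
        simp only [Cochain.comp_zero_cochain_v, Cochain.ofHom_v, Cochain.zero_v] at h0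
        dsimp [truncLEπ] at h0
        rw [dif_pos (show p + n ≤ -(k : ℤ) by omega), comp_eqToHom_iff, zero_comp] at h0
        exact h0
      · by_contra h
        push_neg at h
        exact hp ((hb _ (by omega)).eq_zero_of_tgt _)
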